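/- arXiv:1509.04326 — 5 statements merged into one kernel-verified Lean document; each statement's English description precedes it below -/
import Mathlib

section
/- For every integer l ≥ 1 and every real r ≥ 0, ∫_r^∞ t·(max(1−t,0))^l dt = (1/((l+1)(l+2)))·(max(1−r,0))^(l+1)·((l+1)·r + 1); in particular the montée of the truncated power function φ_l is, up to the positive constant 1/((l+1)(l+2)), the Wendland function (1−r)₊^(l+1)·((l+1)r + 1). -/
open MeasureTheory

lemma montee_aux_deriv (l : ℕ) (t : ℝ) :
    HasDerivAt (fun t : ℝ => -(1 / (((l : ℝ) + 1) * ((l : ℝ) + 2))) * (1 - t) ^ (l + 1) *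
      (((l : ℝ) + 1) * t + 1)) (t * (1 - t) ^ l) t := by
  have h1 : HasDerivAt (fun t : ℝ => (1 - t) ^ (l + 1))
      ((↑(l + 1) * (1 - t) ^ l) * (-1)) t := by
    exact ((hasDerivAt_id t).const_sub 1).pow (l + 1)
  have h2 : HasDerivAt (fun t : ℝ => ((l : ℝ) + 1) * t + 1) ((l : ℝ) + 1) t := by
    simpa using ((hasDerivAt_id t).const_mul ((l : ℝ) + 1)).add_const 1
  have := ((h1.mul h2).const_mul (-(1 / (((l : ℝ) + 1) * ((l : ℝ) + 2)))))
  have hne : ((l : ℝ) + 1) * ((l : ℝ) + 2) ≠ 0 := by positivity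
  convert this using 1
  · rfl
  · rfl
  · funext x; simp only [Pi.mul_apply]; ring
  apply mul_left_cancel₀ hne
  push_cast [pow_succ]
  field_simp
  ring

/-- For every integer `l ≥ 1` and every real `r ≥ 0`,
`∫ t in (r,∞), t * (max (1-t) 0)^l = (1/((l+1)(l+2))) * (max (1-r) 0)^(l+1) * ((l+1)r + 1)`:
the montée of the truncated power function `φ_l` is, up to the positive constant
`1/((l+1)(l+2))`, the Wendland function `(1-r)₊^(l+1) * ((l+1)r + 1)`. -/
theorem montee_truncated_power (l : ℕ) (hl : 1 ≤ l) (r : ℝ) (hr : 0 ≤ r) :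
    ∫ t in Set.Ioi r, t * (max (1 - t) 0) ^ l =
      (1 / ((l + 1) * (l + 2) : ℝ)) * (max (1 - r) 0) ^ (l + 1) * ((l + 1 : ℝ) * r + 1) := by
  have hl0 : l ≠ 0 := by omega
  rcases le_or_gt 1 r with h1 | h1
  · have hmax : max (1 - r) 0 = 0 := max_eq_right (by linarith)
    rw [hmax, zero_pow (by omega : l + 1 ≠ 0), mul_zero, zero_mul]
    apply setIntegral_eq_zero_of_forall_eq_zero
    intro t ht
    have : max (1 - t) 0 = 0 := max_eq_right (by simp at ht; linarith)
    rw [this, zero_pow hl0, mul_zero]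
  · -- r < 1
    have hmax : max (1 - r) 0 = 1 - r := max_eq_left (by linarith)
    have hsplit : Set.Ioi r = Set.Ioc r 1 ∪ Set.Ioi (1 : ℝ) :=
      (Set.Ioc_union_Ioi_eq_Ioi h1.le).symm
    have hcont : Continuous fun t : ℝ => t * (max (1 - t) 0) ^ l := by
      fun_prop
    have hint1 : IntegrableOn (fun t : ℝ => t * (max (1 - t) 0) ^ l) (Set.Ioc r 1) := by
      exact hcont.integrableOn_Ioc
    have hzero : ∀ t ∈ Set.Ioi (1 : ℝ), t * (max (1 - t) 0) ^ l = 0 := by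
      intro t ht
      have : max (1 - t) 0 = 0 := max_eq_right (by simp at ht; linarith)
      rw [this, zero_pow hl0, mul_zero]
    have hint2 : IntegrableOn (fun t : ℝ => t * (max (1 - t) 0) ^ l) (Set.Ioi (1 : ℝ)) := by
      apply IntegrableOn.congr_fun (integrableOn_zero) _ measurableSet_Ioi
      intro t ht; exact (hzero t ht).symm
    rw [hsplit, setIntegral_union (Set.Ioc_disjoint_Ioi le_rfl) measurableSet_Ioi hint1 hint2,
      setIntegral_eq_zero_of_forall_eq_zero hzero, add_zero]
    have heq : ∫ t in Set.Ioc r 1, t * (max (1 - t) 0) ^ l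
        = ∫ t in Set.Ioc r 1, t * (1 - t) ^ l := by
      apply setIntegral_congr_fun measurableSet_Ioc
      intro t ht
      obtain ⟨ht1, ht2⟩ := ht
      simp only
      rw [max_eq_left (by linarith)]
    rw [heq, ← intervalIntegral.integral_of_le h1.le]
    rw [intervalIntegral.integral_eq_sub_of_hasDerivAt
      (fun t _ => montee_aux_deriv l t)
      (by apply Continuous.intervalIntegrable; fun_prop)]
    simp only [sub_self, zero_pow (by omega : l + 1 ≠ 0), mul_zero, zero_mul]
    rw [hmax]
    ring
end

section
/- For every integer l ≥ 1 there exists a constant c > 0 such that for every real r with 0 ≤ r ≤ 1, the twice-iterated montée of the truncated power function satisfies (I²φ_l)(r) = c·(1−r)^(l+2)·((l² + 4l + 3)·r² + (3l + 6)·r + 3), where (I²φ_l)(r) = ∫_r^∞ t·(∫_t^∞ u·(max(1−u,0))^l du) dt. -/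
open MeasureTheory

/-- The montée operator: `(I φ) r = ∫ t in (r, ∞), t * φ t`. -/
noncomputable def montee (φ : ℝ → ℝ) (r : ℝ) : ℝ := ∫ t in Set.Ioi r, t * φ t

private lemma key_integral (m : ℕ) (r : ℝ) :
    ∫ t in r..1, t * (1 - t) ^ m
      = (1 - r) ^ (m + 1) / ((m : ℝ) + 1) - (1 - r) ^ (m + 2) / ((m : ℝ) + 2) := by
  have hne1 : ((m : ℝ) + 1) ≠ 0 := by positivity
  have hne2 : ((m : ℝ) + 2) ≠ 0 := by positivity
  have h := intervalIntegral.integral_eq_sub_of_hasDerivAt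
    (f := fun t : ℝ => (1 - t) ^ (m + 2) / ((m : ℝ) + 2) - (1 - t) ^ (m + 1) / ((m : ℝ) + 1))
    (f' := fun t : ℝ => t * (1 - t) ^ m) (a := r) (b := 1) ?_ ?_
  · rw [h]; simp
  · intro x _
    have h1 : HasDerivAt (fun t : ℝ => 1 - t) (-1) x := by
      simpa using (hasDerivAt_id x).const_sub 1
    have h2 := ((h1.pow (m + 2)).div_const ((m : ℝ) + 2)).sub
      ((h1.pow (m + 1)).div_const ((m : ℝ) + 1))
    convert h2 using 1
    · rfl
    simp only [Nat.add_sub_cancel]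
    push_cast
    field_simp
    ring
  · exact (Continuous.intervalIntegrable (by fun_prop) _ _)

private lemma montee_eq (h : ℝ → ℝ) (hc : Continuous h)
    (h0 : ∀ t : ℝ, 1 ≤ t → h t = 0) {r : ℝ} (hr : r ≤ 1) :
    montee h r = ∫ t in r..1, t * h t := by
  have hf : Continuous fun t : ℝ => t * h t := continuous_id.mul hc
  have hzero : ∀ t ∈ Set.Ioi (1:ℝ), t * h t = 0 := fun t ht => by
    rw [h0 t (le_of_lt ht), mul_zero]
  have hint1 : IntegrableOn (fun t : ℝ => t * h t) (Set.Ioc r 1) := hf.integrableOn_Ioc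
  have hint2 : IntegrableOn (fun t : ℝ => t * h t) (Set.Ioi (1:ℝ)) :=
    (integrableOn_zero).congr_fun (fun t ht => (hzero t ht).symm) measurableSet_Ioi
  have hsplit : montee h r
      = (∫ t in Set.Ioc r 1, t * h t) + ∫ t in Set.Ioi (1:ℝ), t * h t := by
    rw [montee, ← Set.Ioc_union_Ioi_eq_Ioi hr,
      setIntegral_union (Set.Ioc_disjoint_Ioi le_rfl) measurableSet_Ioi hint1 hint2]
  have htail : (∫ t in Set.Ioi (1:ℝ), t * h t) = 0 := by
    rw [setIntegral_congr_fun measurableSet_Ioi hzero, integral_zero]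
  rw [hsplit, htail, add_zero, intervalIntegral.integral_of_le hr]

private lemma montee_phi (l : ℕ) (hl : 1 ≤ l) :
    montee (fun t => (max (1 - t) 0) ^ l)
      = fun r => (max (1 - r) 0) ^ (l + 1) / ((l : ℝ) + 1)
          - (max (1 - r) 0) ^ (l + 2) / ((l : ℝ) + 2) := by
  have hlne : l ≠ 0 := by omega
  funext r
  have hc : Continuous fun t : ℝ => (max (1 - t) 0) ^ l :=
    ((continuous_const.sub continuous_id).max continuous_const).pow l
  rcases le_or_gt r 1 with hr | hr
  · rw [montee_eq _ hc (fun t ht => by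
      rw [max_eq_right (by linarith : 1 - t ≤ 0), zero_pow hlne]) hr]
    have hcong : ∀ t ∈ Set.uIcc r 1, t * (max (1 - t) 0) ^ l = t * (1 - t) ^ l := by
      intro t ht
      rw [Set.uIcc_of_le hr] at ht
      rw [max_eq_left (by linarith [ht.2] : (0:ℝ) ≤ 1 - t)]
    rw [intervalIntegral.integral_congr hcong, key_integral,
      max_eq_left (by linarith : (0:ℝ) ≤ 1 - r)]
  · have h1 : ∀ t ∈ Set.Ioi r, t * (max (1 - t) 0) ^ l = 0 := by
      intro t ht
      simp only [Set.mem_Ioi] at ht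
      rw [max_eq_right (by linarith : 1 - t ≤ 0), zero_pow hlne, mul_zero]
    have hmax : max (1 - r) 0 = 0 := max_eq_right (by linarith)
    rw [montee, setIntegral_congr_fun measurableSet_Ioi h1, integral_zero, hmax,
      zero_pow (by omega : l + 1 ≠ 0), zero_pow (by omega : l + 2 ≠ 0)]
    simp

/-- For every integer `l ≥ 1` there is a constant `c > 0` such that for all
`0 ≤ r ≤ 1`, the twice-iterated montée of the truncated power function
`φ_l r = (max (1-r) 0)^l` equals
`c * (1-r)^(l+2) * ((l²+4l+3) r² + (3l+6) r + 3)`. -/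
theorem montee_sq_truncated_power (l : ℕ) (hl : 1 ≤ l) :
    ∃ c : ℝ, 0 < c ∧ ∀ r : ℝ, 0 ≤ r → r ≤ 1 →
      montee (montee (fun t => (max (1 - t) 0) ^ l)) r =
        c * (1 - r) ^ (l + 2) *
          (((l : ℝ) ^ 2 + 4 * l + 3) * r ^ 2 + (3 * (l : ℝ) + 6) * r + 3) := by
  have h1 : ((l : ℝ) + 1) ≠ 0 := by positivity
  have h2 : ((l : ℝ) + 2) ≠ 0 := by positivity
  have h3 : ((l : ℝ) + 3) ≠ 0 := by positivity
  have h4 : ((l : ℝ) + 4) ≠ 0 := by positivity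
  refine ⟨(((l:ℝ)+1)*((l:ℝ)+2)*((l:ℝ)+3)*((l:ℝ)+4))⁻¹, by positivity, ?_⟩
  intro r hr0 hr1
  rw [montee_phi l hl]
  set G : ℝ → ℝ := fun t => (max (1 - t) 0) ^ (l + 1) / ((l : ℝ) + 1)
      - (max (1 - t) 0) ^ (l + 2) / ((l : ℝ) + 2) with hG
  have hc : Continuous G := by
    apply Continuous.sub
    · exact (((continuous_const.sub continuous_id).max continuous_const).pow (l+1)).div_const _
    · exact (((continuous_const.sub continuous_id).max continuous_const).pow (l+2)).div_const _
  have h0 : ∀ t : ℝ, 1 ≤ t → G t = 0 := by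
    intro t ht
    simp only [hG]
    rw [max_eq_right (by linarith : 1 - t ≤ 0),
      zero_pow (by omega : l + 1 ≠ 0), zero_pow (by omega : l + 2 ≠ 0)]
    simp
  rw [montee_eq G hc h0 hr1]
  have hcong : ∀ t ∈ Set.uIcc r 1, t * G t
      = (1/((l:ℝ)+1)) * (t * (1-t)^(l+1)) - (1/((l:ℝ)+2)) * (t * (1-t)^(l+2)) := by
    intro t ht
    rw [Set.uIcc_of_le hr1] at ht
    simp only [hG]
    rw [max_eq_left (by linarith [ht.2] : (0:ℝ) ≤ 1 - t)]
    ring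
  rw [intervalIntegral.integral_congr hcong,
    intervalIntegral.integral_sub
      ((Continuous.intervalIntegrable (by fun_prop) _ _))
      ((Continuous.intervalIntegrable (by fun_prop) _ _)),
    intervalIntegral.integral_const_mul, intervalIntegral.integral_const_mul,
    key_integral, key_integral]
  push_cast
  rw [show l + 1 + 1 = l + 2 from rfl, show l + 1 + 2 = l + 3 from rfl,
    show l + 2 + 1 = l + 3 from rfl, show l + 2 + 2 = l + 4 from rfl,
    show (1 - r) ^ (l + 3) = (1 - r) ^ (l + 2) * (1 - r) from pow_succ _ _,
    show (1 - r) ^ (l + 4) = (1 - r) ^ (l + 2) * (1 - r) ^ 2 from by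
      rw [show l + 4 = l + 2 + 2 from rfl, pow_add]]
  field_simp
  ring
end

section
/- For every integer l ≥ 1 there exists a constant c > 0 such that for every real r with 0 ≤ r ≤ 1, the three-times-iterated montée of the truncated power function satisfies (I³φ_l)(r) = c·(1−r)^(l+3)·((l³ + 9l² + 23l + 15)·r³ + (6l² + 36l + 45)·r² + (15l + 45)·r + 15), where I³φ_l is obtained by applying (Iφ)(r) = ∫_r^∞ t·φ(t) dt three times to φ_l(r) = (max(1−r,0))^l. -/
open MeasureTheory Set

lemma psi_indicator (k : ℕ) (hk : 1 ≤ k) :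
    (fun t : ℝ => (max (1 - t) 0) ^ k) = Set.indicator (Set.Iic 1) (fun t => (1 - t) ^ k) := by
  funext t
  by_cases h : t ≤ 1
  · rw [Set.indicator_of_mem (show t ∈ Set.Iic 1 from h), max_eq_left (by linarith)]
  · push_neg at h
    rw [Set.indicator_of_notMem (by simpa using h.not_ge), max_eq_right (by linarith),
      zero_pow (by omega)]

lemma psi_int (k : ℕ) (hk : 1 ≤ k) (r : ℝ) :
    IntegrableOn (fun t : ℝ => (max (1 - t) 0) ^ k) (Set.Ioi r) := by
  rw [psi_indicator k hk, IntegrableOn, integrable_indicator_iff measurableSet_Iic, IntegrableOn,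
    Measure.restrict_restrict measurableSet_Iic]
  rw [Set.inter_comm, Set.Ioi_inter_Iic]
  exact Continuous.integrableOn_Ioc (by continuity)

lemma psi_integral (k : ℕ) (hk : 1 ≤ k) (r : ℝ) :
    ∫ t in Set.Ioi r, (max (1 - t) 0) ^ k = (max (1 - r) 0) ^ (k + 1) / ((k : ℝ) + 1) := by
  rw [psi_indicator k hk, MeasureTheory.setIntegral_indicator measurableSet_Iic,
    Set.Ioi_inter_Iic]
  rcases le_or_gt 1 r with h | h
  · rw [Set.Ioc_eq_empty (by exact fun hc => absurd h (not_le.mpr hc)),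
      max_eq_right (by linarith), zero_pow (by omega)]
    simp
  · rw [← intervalIntegral.integral_of_le h.le, max_eq_left (by linarith)]
    have := intervalIntegral.integral_comp_sub_left (a := r) (b := 1) (fun x => x ^ k) 1
    simp only [sub_self] at this
    rw [this, integral_pow]
    norm_num

lemma mul_psi (k : ℕ) (hk : 1 ≤ k) (t : ℝ) :
    t * (max (1 - t) 0) ^ k = (max (1 - t) 0) ^ k - (max (1 - t) 0) ^ (k + 1) := by
  rcases le_or_gt t 1 with h | h
  · rw [max_eq_left (by linarith)]; ring
  · rw [max_eq_right (by linarith), zero_pow (by omega), zero_pow (by omega)]; ring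

lemma montee_sum (n k : ℕ) (hk : 1 ≤ k) (c : ℕ → ℝ) (r : ℝ) :
    montee (fun t => ∑ j ∈ Finset.range n, c j * (max (1 - t) 0) ^ (k + j)) r =
      ∑ j ∈ Finset.range n, c j *
        ((max (1 - r) 0) ^ (k + j + 1) / ((k : ℝ) + j + 1) -
          (max (1 - r) 0) ^ (k + j + 2) / ((k : ℝ) + j + 2)) := by
  unfold montee
  have h1 : ∀ t : ℝ, t * ∑ j ∈ Finset.range n, c j * (max (1 - t) 0) ^ (k + j) =
      ∑ j ∈ Finset.range n, c j *
        ((max (1 - t) 0) ^ (k + j) - (max (1 - t) 0) ^ (k + j + 1)) := by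
    intro t
    rw [Finset.mul_sum]
    refine Finset.sum_congr rfl fun j _ => ?_
    rw [show t * (c j * (max (1 - t) 0) ^ (k + j)) = c j * (t * (max (1 - t) 0) ^ (k + j)) by ring,
      mul_psi (k + j) (by omega) t]
  simp_rw [h1]
  have hint : ∀ j ∈ Finset.range n, Integrable
      (fun t => c j * ((max (1 - t) 0) ^ (k + j) - (max (1 - t) 0) ^ (k + j + 1)))
      (volume.restrict (Set.Ioi r)) := by
    intro j _
    have h := ((psi_int (k + j) (by omega) r).sub (psi_int (k + j + 1) (by omega) r)).const_mul (c j)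
    simpa [Pi.sub_def] using h
  rw [MeasureTheory.integral_finset_sum _ hint]
  refine Finset.sum_congr rfl fun j _ => ?_
  rw [integral_const_mul, MeasureTheory.integral_sub
    (psi_int (k + j) (by omega) r) (psi_int (k + j + 1) (by omega) r),
    psi_integral (k + j) (by omega) r, psi_integral (k + j + 1) (by omega) r]
  push_cast
  ring_nf

noncomputable def mc1 (L : ℝ) : ℕ → ℝ := fun j => if j = 0 then 1 / (L + 1) else -1 / (L + 2)

noncomputable def mc2 (L : ℝ) : ℕ → ℝ := fun j =>
  if j = 0 then 1 / ((L + 1) * (L + 2))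
  else if j = 1 then -(2 * L + 3) / ((L + 1) * (L + 2) * (L + 3))
  else 1 / ((L + 2) * (L + 4))

/-- For every integer `l ≥ 1` there is a constant `c > 0` such that for all
`0 ≤ r ≤ 1`, the three-times-iterated montée of the truncated power function
`φ_l r = (max (1-r) 0)^l` equals
`c * (1-r)^(l+3) * ((l³+9l²+23l+15) r³ + (6l²+36l+45) r² + (15l+45) r + 15)`. -/
theorem montee_cube_truncated_power (l : ℕ) (hl : 1 ≤ l) :
    ∃ c : ℝ, 0 < c ∧ ∀ r : ℝ, 0 ≤ r → r ≤ 1 →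
      montee (montee (montee (fun t => (max (1 - t) 0) ^ l))) r =
        c * (1 - r) ^ (l + 3) *
          (((l : ℝ) ^ 3 + 9 * l ^ 2 + 23 * l + 15) * r ^ 3 +
            (6 * (l : ℝ) ^ 2 + 36 * l + 45) * r ^ 2 + (15 * (l : ℝ) + 45) * r + 15) := by
  have hL0 : (0:ℝ) ≤ (l : ℝ) := Nat.cast_nonneg l
  have n1 : ((l:ℝ) + 1) ≠ 0 := by linarith
  have n2 : ((l:ℝ) + 2) ≠ 0 := by linarith
  have n3 : ((l:ℝ) + 3) ≠ 0 := by linarith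
  have n4 : ((l:ℝ) + 4) ≠ 0 := by linarith
  have n5 : ((l:ℝ) + 5) ≠ 0 := by linarith
  have n6 : ((l:ℝ) + 6) ≠ 0 := by linarith
  refine ⟨1 / (((l:ℝ)+1) * ((l:ℝ)+2) * ((l:ℝ)+3) * ((l:ℝ)+4) * ((l:ℝ)+5) * ((l:ℝ)+6)),
    by positivity, ?_⟩
  intro r hr0 hr1
  have e0 : (fun t : ℝ => (max (1 - t) 0) ^ l)
      = fun t => ∑ j ∈ Finset.range 1, (fun _ => (1:ℝ)) j * (max (1 - t) 0) ^ (l + j) := by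
    funext t; simp
  have h1 : montee (fun t : ℝ => (max (1 - t) 0) ^ l)
      = fun s => ∑ j ∈ Finset.range 2, mc1 (l:ℝ) j * (max (1 - s) 0) ^ (l + 1 + j) := by
    funext s
    rw [e0, montee_sum 1 l hl _ s]
    simp only [Finset.sum_range_succ, Finset.sum_range_zero, mc1]
    norm_num
    field_simp
    ring
  have h2 : montee (montee (fun t : ℝ => (max (1 - t) 0) ^ l))
      = fun s => ∑ j ∈ Finset.range 3, mc2 (l:ℝ) j * (max (1 - s) 0) ^ (l + 2 + j) := by
    funext s
    rw [h1, montee_sum 2 (l + 1) (by omega) _ s]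
    simp only [Finset.sum_range_succ, Finset.sum_range_zero, mc1, mc2]
    norm_num
    field_simp
    ring
  rw [h2, montee_sum 3 (l + 2) (by omega) _ r]
  have hmax : max (1 - r) 0 = 1 - r := max_eq_left (by linarith)
  simp only [Finset.sum_range_succ, Finset.sum_range_zero, mc2, hmax]
  norm_num
  field_simp
  ring
end

section
/- For every integer s ≥ 1 and every integer k ≥ 0, the Wendland function φ_{s,k} = I^k φ_l with l = ⌊s/2⌋ + k + 1 has the form of a compactly supported piecewise polynomial: there exists a univariate real polynomial p_{s,k} of degree ⌊s/2⌋ + 3k + 1 such that φ_{s,k}(r) = p_{s,k}(r) for all r ∈ [0,1] and φ_{s,k}(r) = 0 for all r > 1. -/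
open MeasureTheory

/-- The Wendland function `φ_{s,k} = I^k φ_{⌊s/2⌋+k+1}`, where
`φ_l r = (max (1-r) 0)^l` is the truncated power function. -/
noncomputable def wendland (s k : ℕ) : ℝ → ℝ :=
  montee^[k] (fun r => (max (1 - r) 0) ^ (s / 2 + k + 1))

open Polynomial in
/-- A formal antiderivative of a polynomial. -/
noncomputable def polyAntideriv (p : ℝ[X]) : ℝ[X] :=
  p.sum fun n a => C (a / (n + 1)) * X ^ (n + 1)

open Polynomial in
lemma derivative_polyAntideriv (p : ℝ[X]) : derivative (polyAntideriv p) = p := by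
  unfold polyAntideriv
  rw [Polynomial.sum, map_sum]
  conv_rhs => rw [← Polynomial.sum_C_mul_X_pow_eq p]
  rw [Polynomial.sum]
  refine Finset.sum_congr rfl fun n _ => ?_
  rw [derivative_C_mul, derivative_X_pow]
  simp only [Nat.add_sub_cancel, Nat.cast_add, Nat.cast_one]
  rw [← mul_assoc, ← C_mul, div_mul_cancel₀]
  positivity

open Polynomial in
lemma coeff_polyAntideriv (p : ℝ[X]) (n : ℕ) :
    (polyAntideriv p).coeff (n + 1) = p.coeff n / (n + 1) := by
  unfold polyAntideriv
  rw [Polynomial.coeff_sum, Polynomial.sum]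
  simp only [coeff_C_mul, coeff_X_pow]
  rw [Finset.sum_eq_single n]
  · by_cases h : p.coeff n = 0 <;> simp [h]
  · intro b _ hb
    simp only [Nat.add_right_cancel_iff]
    rw [if_neg (Ne.symm hb), mul_zero]
  · intro h
    simp [Polynomial.notMem_support_iff.mp h]

open Polynomial in
lemma natDegree_polyAntideriv (p : ℝ[X]) (hp : p ≠ 0) :
    (polyAntideriv p).natDegree = p.natDegree + 1 := by
  apply le_antisymm
  · rw [Polynomial.natDegree_le_iff_coeff_eq_zero]
    intro N hN
    obtain ⟨m, rfl⟩ : ∃ m, N = m + 1 := ⟨N - 1, by omega⟩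
    rw [coeff_polyAntideriv, Polynomial.coeff_eq_zero_of_natDegree_lt (by omega), zero_div]
  · apply Polynomial.le_natDegree_of_ne_zero
    rw [coeff_polyAntideriv]
    have : p.coeff p.natDegree ≠ 0 := Polynomial.coeff_ne_zero_of_eq_degree
      (Polynomial.degree_eq_natDegree hp)
    positivity

open Polynomial in
/-- The key step: the montée of a compactly supported piecewise polynomial is one,
with degree increased by 2. -/
lemma montee_step (φ : ℝ → ℝ) (p : ℝ[X]) (hp : p ≠ 0)
    (h1 : ∀ r : ℝ, 0 ≤ r → r ≤ 1 → φ r = p.eval r)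
    (h0 : ∀ r : ℝ, 1 < r → φ r = 0) :
    ∃ q : ℝ[X], q.natDegree = p.natDegree + 2 ∧
      (∀ r : ℝ, 0 ≤ r → r ≤ 1 → montee φ r = q.eval r) ∧
      (∀ r : ℝ, 1 < r → montee φ r = 0) := by
  set Q : ℝ[X] := polyAntideriv (X * p) with hQ
  have hXp : (X * p : ℝ[X]) ≠ 0 := mul_ne_zero X_ne_zero hp
  have hQdeg : Q.natDegree = p.natDegree + 2 := by
    rw [hQ, natDegree_polyAntideriv _ hXp, Polynomial.natDegree_mul X_ne_zero hp,
      Polynomial.natDegree_X]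
    ring
  refine ⟨C (Q.eval 1) - Q, ?_, ?_, ?_⟩
  · rw [show (C (Q.eval 1) - Q : ℝ[X]) = -(Q - C (Q.eval 1)) by ring,
      Polynomial.natDegree_neg, Polynomial.natDegree_sub_C, hQdeg]
  · intro r hr0 hr1
    have key : montee φ r = ∫ t in Set.Ioc r 1, t * p.eval t := by
      unfold montee
      have heq : Set.EqOn (fun t => t * φ t)
          ((Set.Ioc r 1).indicator (fun t => t * p.eval t)) (Set.Ioi r) := by
        intro t ht
        simp only [Set.mem_Ioi] at ht
        show t * φ t = (Set.Ioc r 1).indicator (fun t => t * p.eval t) t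
        by_cases h : t ≤ 1
        · rw [Set.indicator_of_mem (Set.mem_Ioc.mpr ⟨ht, h⟩), h1 t (le_trans hr0 ht.le) h]
        · rw [Set.indicator_of_notMem (fun hc => h hc.2), h0 t (not_le.mp h), mul_zero]
      rw [MeasureTheory.setIntegral_congr_fun measurableSet_Ioi heq,
        MeasureTheory.integral_indicator measurableSet_Ioc,
        Measure.restrict_restrict measurableSet_Ioc,
        Set.inter_eq_self_of_subset_left (Set.Ioc_subset_Ioi_self)]
    rw [key, ← intervalIntegral.integral_of_le hr1]
    have hftc : ∫ t in r..1, t * p.eval t = Q.eval 1 - Q.eval r := by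
      have : ∀ x ∈ Set.uIcc r 1, HasDerivAt (fun y => Q.eval y) (x * p.eval x) x := by
        intro x _
        have := Q.hasDerivAt x
        rwa [hQ, derivative_polyAntideriv, Polynomial.eval_mul, Polynomial.eval_X] at this
      exact intervalIntegral.integral_eq_sub_of_hasDerivAt this
        ((continuous_id.mul (Polynomial.continuous p)).intervalIntegrable r 1)
    rw [hftc]
    simp
  · intro r hr
    unfold montee
    have heq : Set.EqOn (fun t => t * φ t) (fun _ => (0:ℝ)) (Set.Ioi r) := by
      intro t ht
      simp only [Set.mem_Ioi] at ht
      show t * φ t = 0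
      rw [h0 t (lt_trans hr ht), mul_zero]
    rw [MeasureTheory.setIntegral_congr_fun measurableSet_Ioi heq]
    simp

open Polynomial in
lemma montee_iterate (l : ℕ) (hl : 1 ≤ l) (j : ℕ) :
    ∃ p : ℝ[X], p.natDegree = l + 2 * j ∧
      (∀ r : ℝ, 0 ≤ r → r ≤ 1 →
        montee^[j] (fun r => (max (1 - r) 0) ^ l) r = p.eval r) ∧
      (∀ r : ℝ, 1 < r → montee^[j] (fun r => (max (1 - r) 0) ^ l) r = 0) := by
  induction j with
  | zero =>
    refine ⟨(1 - X) ^ l, ?_, ?_, ?_⟩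
    · rw [show ((1 - X : ℝ[X])) = -(X - C 1) by rw [Polynomial.C_1]; ring, Polynomial.natDegree_pow,
        Polynomial.natDegree_neg, Polynomial.natDegree_X_sub_C]
      omega
    · intro r hr0 hr1
      simp only [Function.iterate_zero_apply]
      rw [max_eq_left (by linarith)]
      simp
    · intro r hr
      simp only [Function.iterate_zero_apply]
      rw [max_eq_right (by linarith)]
      exact zero_pow (by omega)
  | succ n ih =>
    obtain ⟨p, hdeg, h1, h0⟩ := ih
    have hpne : p ≠ 0 := fun hc => by simp [hc] at hdeg; omega
    obtain ⟨q, hqdeg, hq1, hq0⟩ := montee_step _ p hpne h1 h0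
    refine ⟨q, by rw [hqdeg, hdeg]; ring, ?_, ?_⟩
    · intro r hr0 hr1
      rw [Function.iterate_succ_apply']
      exact hq1 r hr0 hr1
    · intro r hr
      rw [Function.iterate_succ_apply']
      exact hq0 r hr

/-- For every integer `s ≥ 1` and every integer `k ≥ 0`, the Wendland function
`φ_{s,k}` is a compactly supported piecewise polynomial: there is a univariate real
polynomial `p` of degree `⌊s/2⌋ + 3k + 1` with `φ_{s,k} r = p(r)` for `r ∈ [0,1]`
and `φ_{s,k} r = 0` for `r > 1`. -/
theorem wendland_piecewise_polynomial (s : ℕ) (hs : 1 ≤ s) (k : ℕ) :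
    ∃ p : Polynomial ℝ, p.natDegree = s / 2 + 3 * k + 1 ∧
      (∀ r : ℝ, 0 ≤ r → r ≤ 1 → wendland s k r = p.eval r) ∧
      (∀ r : ℝ, 1 < r → wendland s k r = 0) := by
  obtain ⟨p, hdeg, h1, h0⟩ := montee_iterate (s / 2 + k + 1) (by omega) k
  exact ⟨p, by omega, h1, h0⟩
end

section
/- For every integer s ≥ 1 and every integer k ≥ 0, the Wendland function φ_{s,k} = I^k φ_l with l = ⌊s/2⌋ + k + 1 belongs to C^{2k}(ℝ): the even extension x ↦ φ_{s,k}(|x|) is 2k times continuously differentiable on the whole real line. -/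
open MeasureTheory
open Filter

noncomputable def uu : ℝ → ℝ := fun x => max (1 - |x|) 0

lemma uu_nonneg (x : ℝ) : 0 ≤ uu x := le_max_right _ _

lemma uu_le_one (x : ℝ) : uu x ≤ 1 := by
  have := abs_nonneg x
  exact max_le (by linarith) zero_le_one

lemma uu_cont : Continuous uu := (continuous_const.sub continuous_abs).max continuous_const

/-- derivative-at-zero helper via a power bound. -/
lemma hasDerivAt_zero_of_bound {f : ℝ → ℝ} (hf0 : f 0 = 0) (n : ℕ) (hn : 1 ≤ n)
    (hb : ∀ y, |f y| ≤ |y| ^ (n + 1)) : HasDerivAt f 0 0 := by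
  rw [hasDerivAt_iff_tendsto_slope]
  apply squeeze_zero_norm' (a := fun y : ℝ => |y| ^ n)
  · filter_upwards [self_mem_nhdsWithin] with y hy
    have hy' : (y : ℝ) ≠ 0 := hy
    have hs : slope f 0 y = f y / y := by
      simp [slope_def_field, hf0]
    rw [hs, Real.norm_eq_abs, abs_div]
    have h1 : |f y| / |y| ≤ |y| ^ (n + 1) / |y| := by
      gcongr
      exact hb y
    have h2 : |y| ^ (n + 1) / |y| = |y| ^ n := by
      rw [pow_succ]
      field_simp
    linarith [h1, h2 ▸ h1]
  · have h : Tendsto (fun y : ℝ => |y| ^ n) (nhds 0) (nhds (|0| ^ n)) :=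
      ((continuous_abs.pow n).tendsto 0)
    simpa [zero_pow (by omega : n ≠ 0)] using h.mono_left nhdsWithin_le_nhds

lemma hasDerivAt_id_mul {g : ℝ → ℝ} (hg : ContinuousAt g 0) :
    HasDerivAt (fun y => y * g y) (g 0) 0 := by
  rw [hasDerivAt_iff_tendsto_slope]
  have h : Filter.Tendsto g (nhdsWithin 0 {(0:ℝ)}ᶜ) (nhds (g 0)) :=
    hg.tendsto.mono_left nhdsWithin_le_nhds
  apply h.congr'
  filter_upwards [self_mem_nhdsWithin] with y hy
  have hy' : (y : ℝ) ≠ 0 := hy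
  simp [slope_def_field, mul_div_assoc, mul_comm y (g y), mul_div_cancel_right₀ _ hy']

/-- derivative of `s ↦ (max s 0)^(q+2)` everywhere. -/
lemma hasDerivAt_max_pow (q : ℕ) (t : ℝ) :
    HasDerivAt (fun s : ℝ => max s 0 ^ (q + 2)) ((q + 2) * max t 0 ^ (q + 1)) t := by
  rcases lt_trichotomy t 0 with ht | ht | ht
  · have h : HasDerivAt (fun _ : ℝ => (0:ℝ)) 0 t := hasDerivAt_const t 0
    have he : (fun s : ℝ => max s 0 ^ (q + 2)) =ᶠ[nhds t] fun _ => (0:ℝ) := by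
      filter_upwards [Iio_mem_nhds ht] with y hy
      rw [max_eq_right (le_of_lt hy)]
      simp
    have := h.congr_of_eventuallyEq he
    simpa [max_eq_right ht.le] using this
  · subst ht
    have h0 : (fun s : ℝ => max s 0 ^ (q + 2)) 0 = 0 := by simp
    have := hasDerivAt_zero_of_bound (f := fun s : ℝ => max s 0 ^ (q + 2)) h0 (q + 1)
      (by omega) (fun y => ?_)
    · simpa using this
    · have h1 : max y 0 ≤ |y| := max_le (le_abs_self y) (abs_nonneg y)
      have h2 : (0:ℝ) ≤ max y 0 := le_max_right _ _
      calc |max y 0 ^ (q + 2)| = max y 0 ^ (q + 2) := abs_of_nonneg (by positivity)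
        _ ≤ |y| ^ (q + 2) := pow_le_pow_left₀ h2 h1 _
  · have h := hasDerivAt_pow (q + 2) t
    have he : (fun s : ℝ => max s 0 ^ (q + 2)) =ᶠ[nhds t] fun s => s ^ (q + 2) := by
      filter_upwards [Ioi_mem_nhds ht] with y hy
      rw [max_eq_left (le_of_lt hy)]
    have := h.congr_of_eventuallyEq he
    simpa [max_eq_left ht.le, Nat.add_sub_cancel] using this

lemma hasDerivAt_pow_mul_abs (m i : ℕ) (x : ℝ) :
    HasDerivAt (fun y : ℝ => y ^ (m + 1) * |y| ^ i)
      (((m : ℝ) + 1 + i) * (x ^ m * |x| ^ i)) x := by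
  rcases lt_trichotomy x 0 with hx | hx | hx
  · -- x < 0 : eventually equal to (-1)^i * y^(m+1+i)
    have h := (hasDerivAt_pow (m + 1 + i) x).const_mul ((-1 : ℝ) ^ i)
    have he : (fun y : ℝ => y ^ (m + 1) * |y| ^ i)
        =ᶠ[nhds x] fun y => (-1 : ℝ) ^ i * y ^ (m + 1 + i) := by
      filter_upwards [Iio_mem_nhds hx] with y hy
      rw [abs_of_neg hy, neg_pow]
      ring
    have h2 := h.congr_of_eventuallyEq he
    have hv : (-1 : ℝ) ^ i * (↑(m + 1 + i) * x ^ (m + 1 + i - 1))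
        = ((m : ℝ) + 1 + i) * (x ^ m * |x| ^ i) := by
      rw [abs_of_neg hx, neg_pow, show m + 1 + i - 1 = m + i from by omega]
      push_cast
      ring
    rwa [hv] at h2
  · -- x = 0
    subst hx
    rcases Nat.eq_zero_or_pos (m + i) with hmi | hmi
    · obtain ⟨hm, hi⟩ : m = 0 ∧ i = 0 := by omega
      subst hm; subst hi
      have : HasDerivAt (fun y : ℝ => y ^ (0 + 1) * |y| ^ 0) 1 0 := by
        simpa using hasDerivAt_id' (0 : ℝ)
      simpa using this
    · have h0 : (fun y : ℝ => y ^ (m + 1) * |y| ^ i) 0 = 0 := by simp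
      have hval : ((m : ℝ) + 1 + i) * ((0:ℝ) ^ m * |(0:ℝ)| ^ i) = 0 := by
        rcases Nat.eq_zero_or_pos m with hm | hm
        · have hi : 0 < i := by omega
          rw [abs_zero, zero_pow hi.ne']
          ring
        · rw [zero_pow hm.ne']
          ring
      rw [hval]
      apply hasDerivAt_zero_of_bound (f := fun y : ℝ => y ^ (m + 1) * |y| ^ i) h0 (m + i) hmi
      intro y
      rw [abs_mul, abs_pow, abs_pow, abs_abs, ← pow_add]
      apply le_of_eq
      congr 1
      omega
  · -- x > 0 : eventually y^(m+1+i)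
    have h := hasDerivAt_pow (m + 1 + i) x
    have he : (fun y : ℝ => y ^ (m + 1) * |y| ^ i)
        =ᶠ[nhds x] fun y => y ^ (m + 1 + i) := by
      filter_upwards [Ioi_mem_nhds hx] with y hy
      rw [abs_of_pos hy]
      ring
    have h2 := h.congr_of_eventuallyEq he
    have hv : (↑(m + 1 + i) : ℝ) * x ^ (m + 1 + i - 1)
        = ((m : ℝ) + 1 + i) * (x ^ m * |x| ^ i) := by
      rw [abs_of_pos hx, show m + 1 + i - 1 = m + i from by omega]
      push_cast
      ring
    rwa [hv] at h2

lemma hasDerivAt_base (m i q : ℕ) (x : ℝ) :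
    HasDerivAt (fun y : ℝ => y ^ (m + 1) * |y| ^ i * uu y ^ (q + 2))
      (((m : ℝ) + 1 + i) * (x ^ m * |x| ^ i * uu x ^ (q + 2))
        - ((q : ℝ) + 2) * (x ^ m * |x| ^ (i + 1) * uu x ^ (q + 1))) x := by
  rcases ne_or_eq x 0 with hx | hx
  · -- x ≠ 0 : product rule
    have hA := hasDerivAt_pow_mul_abs m i x
    have habs : HasDerivAt (fun y : ℝ => |y|) (if 0 < x then (1:ℝ) else -1) x := by
      rcases hx.lt_or_gt with h | h
      · simpa [not_lt.2 h.le, h.not_gt] using hasDerivAt_abs_neg h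
      · simpa [h] using hasDerivAt_abs_pos h
    have hinner : HasDerivAt (fun y : ℝ => 1 - |y|) (-(if 0 < x then (1:ℝ) else -1)) x :=
      habs.const_sub 1
    have houter := hasDerivAt_max_pow q (1 - |x|)
    have hB : HasDerivAt (fun y : ℝ => uu y ^ (q + 2))
        (((q : ℝ) + 2) * uu x ^ (q + 1) * (-(if 0 < x then (1:ℝ) else -1))) x := by
      have := houter.comp x hinner
      simpa [uu, Function.comp_def, push_cast] using this
    have h := hA.mul hB
    have hv : ((m : ℝ) + 1 + i) * (x ^ m * |x| ^ i) * (uu x ^ (q + 2))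
          + x ^ (m + 1) * |x| ^ i * (((q : ℝ) + 2) * uu x ^ (q + 1) * (-(if 0 < x then (1:ℝ) else -1)))
        = ((m : ℝ) + 1 + i) * (x ^ m * |x| ^ i * uu x ^ (q + 2))
          - ((q : ℝ) + 2) * (x ^ m * |x| ^ (i + 1) * uu x ^ (q + 1)) := by
      rcases hx.lt_or_gt with hneg | hpos
      · rw [if_neg (not_lt.2 hneg.le), abs_of_neg hneg]
        ring
      · rw [if_pos hpos, abs_of_pos hpos]
        ring
    rwa [hv] at h
  · -- x = 0
    subst hx
    rcases Nat.eq_zero_or_pos (m + i) with hmi | hmi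
    · obtain ⟨hm, hi⟩ : m = 0 ∧ i = 0 := by omega
      subst hm; subst hi
      have hu0 : uu (0:ℝ) = 1 := by simp [uu]
      have h := hasDerivAt_id_mul (g := fun y : ℝ => uu y ^ (q + 2))
        ((uu_cont.pow (q + 2)).continuousAt)
      have he : (fun y : ℝ => y ^ (0 + 1) * |y| ^ 0 * uu y ^ (q + 2))
          = fun y : ℝ => y * uu y ^ (q + 2) := by
        funext y; simp
      rw [he]
      convert h using 1
      simp [hu0]
    · have h0 : (fun y : ℝ => y ^ (m + 1) * |y| ^ i * uu y ^ (q + 2)) 0 = 0 := by simp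
      have hval : ((0:ℝ) ^ m * |(0:ℝ)| ^ i) = 0 := by
        rcases Nat.eq_zero_or_pos m with hm | hm
        · have hi : 0 < i := by omega
          rw [abs_zero, zero_pow hi.ne']; ring
        · rw [zero_pow hm.ne']; ring
      have hgoal : ((m : ℝ) + 1 + i) * ((0:ℝ) ^ m * |(0:ℝ)| ^ i * uu 0 ^ (q + 2))
            - ((q : ℝ) + 2) * ((0:ℝ) ^ m * |(0:ℝ)| ^ (i + 1) * uu 0 ^ (q + 1)) = 0 := by
        have : ((0:ℝ) ^ m * |(0:ℝ)| ^ (i + 1)) = 0 := by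
          rw [abs_zero, zero_pow (Nat.succ_ne_zero i)]; ring
        rw [show (0:ℝ) ^ m * |(0:ℝ)| ^ i * uu 0 ^ (q+2) = ((0:ℝ)^m * |(0:ℝ)|^i) * uu 0 ^ (q+2) from by ring,
          hval, show (0:ℝ) ^ m * |(0:ℝ)| ^ (i+1) * uu 0 ^ (q+1) = ((0:ℝ)^m * |(0:ℝ)|^(i+1)) * uu 0 ^ (q+1) from by ring, this]
        ring
      rw [hgoal]
      apply hasDerivAt_zero_of_bound
        (f := fun y : ℝ => y ^ (m + 1) * |y| ^ i * uu y ^ (q + 2)) h0 (m + i) hmi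
      intro y
      have h1 : |y ^ (m + 1) * |y| ^ i * uu y ^ (q + 2)| = |y| ^ (m + 1 + i) * uu y ^ (q + 2) := by
        rw [abs_mul, abs_mul, abs_pow, abs_pow, abs_pow, abs_abs,
          abs_of_nonneg (uu_nonneg y), ← pow_add]
      rw [h1]
      calc |y| ^ (m + 1 + i) * uu y ^ (q + 2)
          ≤ |y| ^ (m + 1 + i) * 1 := by
            apply mul_le_mul_of_nonneg_left _ (by positivity)
            exact pow_le_one₀ (uu_nonneg y) (uu_le_one y)
        _ = |y| ^ (m + i + 1) := by rw [mul_one]; congr 1; omega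

lemma contDiff_succ_of_deriv {f : ℝ → ℝ} (n : ℕ) (hd : Differentiable ℝ f)
    (h : ContDiff ℝ (n : ℕ) (deriv f)) : ContDiff ℝ ((n + 1 : ℕ)) f := by
  have hc : ((n + 1 : ℕ) : WithTop ℕ∞) = (n : WithTop ℕ∞) + 1 := by push_cast; rfl
  rw [hc]
  refine contDiff_succ_iff_deriv.2 ⟨hd, ?_, h⟩
  intro hω
  simp at hω

lemma contDiff_base : ∀ m i e : ℕ, m + 1 ≤ e →
    ContDiff ℝ (m : ℕ) (fun y : ℝ => y ^ m * |y| ^ i * uu y ^ e) := by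
  intro m
  induction m with
  | zero =>
    intro i e _
    rw [show ((0 : ℕ) : WithTop ℕ∞) = 0 from rfl, contDiff_zero]
    exact ((continuous_pow 0).mul (continuous_abs.pow i)).mul (uu_cont.pow e)
  | succ m ih =>
    intro i e he
    obtain ⟨q, rfl⟩ : ∃ q, e = q + 2 := ⟨e - 2, by omega⟩
    apply contDiff_succ_of_deriv
    · exact fun x => (hasDerivAt_base m i q x).differentiableAt
    · have hderiv : deriv (fun y : ℝ => y ^ (m + 1) * |y| ^ i * uu y ^ (q + 2))
          = fun x => ((m : ℝ) + 1 + i) * (x ^ m * |x| ^ i * uu x ^ (q + 2))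
            - ((q : ℝ) + 2) * (x ^ m * |x| ^ (i + 1) * uu x ^ (q + 1)) := by
        funext x
        exact (hasDerivAt_base m i q x).deriv
      rw [hderiv]
      have h1 := (contDiff_const (c := (m : ℝ) + 1 + i)).mul (ih i (q + 2) (by omega))
      have h2 := (contDiff_const (c := (q : ℝ) + 2)).mul (ih (i + 1) (q + 1) (by omega))
      exact h1.sub h2


lemma supp_iter (l : ℕ) (hl : 1 ≤ l) :
    ∀ j r, (1:ℝ) ≤ r → montee^[j] (fun r => (max (1 - r) 0) ^ l) r = 0 := by
  intro j
  induction j with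
  | zero =>
    intro r hr
    simp only [Function.iterate_zero, id_eq]
    rw [max_eq_right (by linarith), zero_pow (by omega : l ≠ 0)]
  | succ j ih =>
    intro r hr
    rw [Function.iterate_succ_apply']
    show ∫ t in Set.Ioi r, t * (montee^[j] (fun r => (max (1 - r) 0) ^ l) t) = 0
    have heq : Set.EqOn (fun t : ℝ => t * (montee^[j] (fun r => (max (1 - r) 0) ^ l) t))
        (fun _ => (0:ℝ)) (Set.Ioi r) := fun t ht => by
      simp only []
      rw [ih t (le_trans hr (le_of_lt ht))]; ring
    rw [setIntegral_congr_fun measurableSet_Ioi heq]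
    simp

lemma integral_Ioi_eq_interval {G : ℝ → ℝ} (hG : Integrable G)
    (hsupp : ∀ t : ℝ, (2:ℝ) ≤ t → G t = 0) (a : ℝ) :
    ∫ t in Set.Ioi a, G t = ∫ t in a..2, G t := by
  have hIoi2 : ∀ b : ℝ, (2:ℝ) ≤ b → ∫ t in Set.Ioi b, G t = 0 := by
    intro b hb
    have heq : Set.EqOn G (fun _ => (0:ℝ)) (Set.Ioi b) :=
      fun t ht => hsupp t (le_trans hb (le_of_lt ht))
    rw [setIntegral_congr_fun measurableSet_Ioi heq]
    simp
  rcases le_or_gt a 2 with h | h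
  · rw [intervalIntegral.integral_of_le h, ← Set.Ioc_union_Ioi_eq_Ioi h,
      setIntegral_union (Set.Ioc_disjoint_Ioi le_rfl) measurableSet_Ioi
        hG.integrableOn hG.integrableOn, hIoi2 2 le_rfl, add_zero]
  · have heq : Set.EqOn G (fun _ => (0:ℝ)) (Set.Ioc 2 a) :=
      fun t ht => hsupp t (le_of_lt ht.1)
    rw [hIoi2 a h.le, intervalIntegral.integral_of_ge h.le,
      setIntegral_congr_fun measurableSet_Ioc heq]
    simp

lemma contDiff_main (l : ℕ) :
    ∀ j m : ℕ, j + m + 1 ≤ l →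
      ContDiff ℝ ((2 * j + m : ℕ))
        (fun x : ℝ => x ^ m * montee^[j] (fun r => (max (1 - r) 0) ^ l) |x|) := by
  set φ : ℝ → ℝ := fun r => (max (1 - r) 0) ^ l with hφ
  intro j
  induction j with
  | zero =>
    intro m hm
    have h := contDiff_base m 0 l (by omega)
    simp only [pow_zero, mul_one] at h
    have he : (fun x : ℝ => x ^ m * montee^[0] φ |x|)
        = fun y : ℝ => y ^ m * uu y ^ l := by
      funext y
      simp [hφ, uu]
    rw [he, show 2 * 0 + m = m from by omega]
    exact h
  | succ j IH =>
    intro m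
    have hl1 : ∀ m', j + m' + 1 ≤ l → True := fun _ _ => trivial
    induction m with
    | zero =>
      intro hm
      -- preliminary facts
      have hcont : Continuous (fun x : ℝ => montee^[j] φ |x|) := by
        have := (IH 0 (by omega)).continuous
        simpa using this
      set G : ℝ → ℝ := fun t => t * montee^[j] φ |t| with hG
      have hGcont : Continuous G := continuous_id.mul (hcont)
      have hGsupp : ∀ t : ℝ, (1:ℝ) ≤ |t| → G t = 0 := by
        intro t ht
        simp only [hG]
        rw [supp_iter l (by omega) j |t| ht]; ring
      have hGcs : HasCompactSupport G := by
        apply HasCompactSupport.intro (K := Set.Icc (-1) 1) isCompact_Icc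
        intro t ht
        apply hGsupp
        simp only [Set.mem_Icc, not_and_or, not_le] at ht
        rcases ht with h | h
        · rw [abs_of_neg (by linarith)]; linarith
        · rw [abs_of_pos (by linarith)]; linarith
      have hGint : Integrable G := hGcont.integrable_of_hasCompactSupport hGcs
      have hGodd : ∀ t : ℝ, G (-t) = -G t := by
        intro t; simp only [hG, abs_neg]; ring
      -- representation
      have hrep : ∀ x : ℝ, montee^[j+1] φ |x| = ∫ t in x..2, G t := by
        intro x
        rw [Function.iterate_succ_apply']
        show ∫ t in Set.Ioi |x|, t * (montee^[j] φ t) = _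
        have h1 : ∫ t in Set.Ioi |x|, t * (montee^[j] φ t) = ∫ t in Set.Ioi |x|, G t := by
          apply setIntegral_congr_fun measurableSet_Ioi
          intro t ht
          have ht' : 0 < t := lt_of_le_of_lt (abs_nonneg x) ht
          simp only [hG]
          rw [abs_of_pos ht']
        have h2 : ∫ t in Set.Ioi |x|, G t = ∫ t in |x|..2, G t :=
          integral_Ioi_eq_interval hGint (fun t ht => hGsupp t (by rw [abs_of_pos (by linarith)]; linarith)) |x|
        rcases le_or_gt 0 x with hx | hx
        · rw [h1, h2, abs_of_nonneg hx]
        · rw [h1, h2, abs_of_neg hx]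
          have hadd : (∫ t in x..(-x), G t) + (∫ t in (-x)..2, G t) = ∫ t in x..2, G t :=
            intervalIntegral.integral_add_adjacent_intervals
              (hGcont.intervalIntegrable x (-x)) (hGcont.intervalIntegrable (-x) 2)
          have hodd : (∫ t in x..(-x), G t) = 0 := by
            have hcn : (∫ t in x..(-x), G (-t)) = ∫ t in (-(-x))..(-x), G t :=
              intervalIntegral.integral_comp_neg (a := x) (b := -x) G
            rw [neg_neg] at hcn
            have hlhs : (∫ t in x..(-x), G (-t)) = -∫ t in x..(-x), G t := by
              rw [show (fun t => G (-t)) = fun t => -G t from funext hGodd]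
              exact intervalIntegral.integral_neg
            rw [hlhs] at hcn
            linarith
          rw [← hadd, hodd, zero_add]
      -- derivative
      have hder : ∀ x : ℝ, HasDerivAt (fun y : ℝ => montee^[j+1] φ |y|)
          (-(x * montee^[j] φ |x|)) x := by
        intro x
        have h := intervalIntegral.integral_hasDerivAt_left
          (hGcont.intervalIntegrable x 2)
          hGcont.stronglyMeasurable.stronglyMeasurableAtFilter
          hGcont.continuousAt
        exact h.congr_of_eventuallyEq (Filter.Eventually.of_forall hrep)
      rw [show 2 * (j+1) + 0 = (2 * j + 1) + 1 from by omega]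
      apply contDiff_succ_of_deriv
      · simp only [pow_zero, one_mul]
        exact fun x => (hder x).differentiableAt
      · have hderiv : deriv (fun x : ℝ => x ^ 0 * montee^[j+1] φ |x|)
            = fun x : ℝ => -(x ^ 1 * montee^[j] φ |x|) := by
          funext x
          have h := hder x
          have he : (fun y : ℝ => y ^ 0 * montee^[j+1] φ |y|)
              = fun y : ℝ => montee^[j+1] φ |y| := by funext y; simp
          rw [he, h.deriv, pow_one]
        rw [hderiv]
        exact (IH 1 (by omega)).neg
    | succ m ihm =>
      intro hm
      -- we need hder again; rebuild
      have hcont : Continuous (fun x : ℝ => montee^[j] φ |x|) := by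
        have := (IH 0 (by omega)).continuous
        simpa using this
      set G : ℝ → ℝ := fun t => t * montee^[j] φ |t| with hG
      have hGcont : Continuous G := continuous_id.mul (hcont)
      have hGsupp : ∀ t : ℝ, (1:ℝ) ≤ |t| → G t = 0 := by
        intro t ht
        simp only [hG]
        rw [supp_iter l (by omega) j |t| ht]; ring
      have hGcs : HasCompactSupport G := by
        apply HasCompactSupport.intro (K := Set.Icc (-1) 1) isCompact_Icc
        intro t ht
        apply hGsupp
        simp only [Set.mem_Icc, not_and_or, not_le] at ht
        rcases ht with h | h
        · rw [abs_of_neg (by linarith)]; linarith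
        · rw [abs_of_pos (by linarith)]; linarith
      have hGint : Integrable G := hGcont.integrable_of_hasCompactSupport hGcs
      have hGodd : ∀ t : ℝ, G (-t) = -G t := by
        intro t; simp only [hG, abs_neg]; ring
      have hrep : ∀ x : ℝ, montee^[j+1] φ |x| = ∫ t in x..2, G t := by
        intro x
        rw [Function.iterate_succ_apply']
        show ∫ t in Set.Ioi |x|, t * (montee^[j] φ t) = _
        have h1 : ∫ t in Set.Ioi |x|, t * (montee^[j] φ t) = ∫ t in Set.Ioi |x|, G t := by
          apply setIntegral_congr_fun measurableSet_Ioi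
          intro t ht
          have ht' : 0 < t := lt_of_le_of_lt (abs_nonneg x) ht
          simp only [hG]
          rw [abs_of_pos ht']
        have h2 : ∫ t in Set.Ioi |x|, G t = ∫ t in |x|..2, G t :=
          integral_Ioi_eq_interval hGint (fun t ht => hGsupp t (by rw [abs_of_pos (by linarith)]; linarith)) |x|
        rcases le_or_gt 0 x with hx | hx
        · rw [h1, h2, abs_of_nonneg hx]
        · rw [h1, h2, abs_of_neg hx]
          have hadd : (∫ t in x..(-x), G t) + (∫ t in (-x)..2, G t) = ∫ t in x..2, G t :=
            intervalIntegral.integral_add_adjacent_intervals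
              (hGcont.intervalIntegrable x (-x)) (hGcont.intervalIntegrable (-x) 2)
          have hodd : (∫ t in x..(-x), G t) = 0 := by
            have hcn : (∫ t in x..(-x), G (-t)) = ∫ t in (-(-x))..(-x), G t :=
              intervalIntegral.integral_comp_neg (a := x) (b := -x) G
            rw [neg_neg] at hcn
            have hlhs : (∫ t in x..(-x), G (-t)) = -∫ t in x..(-x), G t := by
              rw [show (fun t => G (-t)) = fun t => -G t from funext hGodd]
              exact intervalIntegral.integral_neg
            rw [hlhs] at hcn
            linarith
          rw [← hadd, hodd, zero_add]
      have hder : ∀ x : ℝ, HasDerivAt (fun y : ℝ => montee^[j+1] φ |y|)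
          (-(x * montee^[j] φ |x|)) x := by
        intro x
        have h := intervalIntegral.integral_hasDerivAt_left
          (hGcont.intervalIntegrable x 2)
          hGcont.stronglyMeasurable.stronglyMeasurableAtFilter
          hGcont.continuousAt
        exact h.congr_of_eventuallyEq (Filter.Eventually.of_forall hrep)
      -- product derivative
      have hD : ∀ x : ℝ, HasDerivAt (fun y : ℝ => y ^ (m+1) * montee^[j+1] φ |y|)
          (((m:ℝ) + 1) * (x ^ m * montee^[j+1] φ |x|)
            - x ^ (m + 2) * montee^[j] φ |x|) x := by
        intro x
        have h := (hasDerivAt_pow (m+1) x).mul (hder x)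
        have hv : (↑(m+1) : ℝ) * x ^ (m + 1 - 1) * montee^[j+1] φ |x|
            + x ^ (m+1) * -(x * montee^[j] φ |x|)
            = ((m:ℝ) + 1) * (x ^ m * montee^[j+1] φ |x|)
              - x ^ (m + 2) * montee^[j] φ |x| := by
          rw [show m + 1 - 1 = m from by omega]
          push_cast
          ring
        rwa [hv] at h
      rw [show 2 * (j+1) + (m+1) = (2 * (j+1) + m) + 1 from by omega]
      apply contDiff_succ_of_deriv
      · exact fun x => (hD x).differentiableAt
      · have hderiv : deriv (fun y : ℝ => y ^ (m+1) * montee^[j+1] φ |y|)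
            = fun x : ℝ => ((m:ℝ) + 1) * (x ^ m * montee^[j+1] φ |x|)
              - x ^ (m + 2) * montee^[j] φ |x| := by
          funext x
          exact (hD x).deriv
        rw [hderiv]
        have h1 := (contDiff_const (c := (m:ℝ) + 1)).mul (ihm (by omega))
        have h2 := IH (m + 2) (by omega)
        rw [show 2 * j + (m + 2) = 2 * (j + 1) + m from by omega] at h2
        exact h1.sub h2


/-- For every integer `s ≥ 1` and every integer `k ≥ 0`, the Wendland function
`φ_{s,k}` belongs to `C^{2k}(ℝ)`: its even extension `x ↦ φ_{s,k} |x|` is `2k` times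
continuously differentiable on the whole real line. -/
theorem wendland_smoothness (s : ℕ) (hs : 1 ≤ s) (k : ℕ) :
    ContDiff ℝ (2 * k) (fun x : ℝ => wendland s k |x|) := by
  have h := contDiff_main (s / 2 + k + 1) k 0 (by omega)
  simp only [pow_zero, one_mul, Nat.add_zero] at h
  have hc : ((2 * k : ℕ) : WithTop ℕ∞) = 2 * (k : WithTop ℕ∞) := by push_cast; rfl
  rw [← hc]
  exact h
end
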